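/- For every deterministic distributed algorithm on a channel with collision detection and every integer b ≥ 1, there exists a 1-activating injection pattern admissible for the adversary of type (1, b) such that the resulting execution contains infinitely many void rounds (rounds in which no packet is heard) while the adversary injects packets at the average rate of one per round; consequently the number of queued packets grows unbounded, so no deterministic distributed algorithm is stable against a 1-activating adversary of injection rate 1 and burstiness at least 2. -/
import Mathlib


/-- Feedback that a station receives from the channel in a round. -/
inductive Feedback where
  | silence : Feedback
  | collision : Feedback
  | heard : Bool → Feedback

/-- A deterministic distributed (full-sensing) algorithm. -/
structure Algo where
  State : Type
  init : State
  transmits : State → Bool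
  step : State → Feedback → Bool → State

/-- Admissibility of a 1-activating injection pattern for the adversary of type `(ρ, b)`. -/
def Admissible (ρ : ℝ) (b : ℕ) (a : ℕ → ℕ) : Prop :=
  ∀ s n : ℕ, ((∑ t ∈ Finset.Ico s (s + n), a t : ℕ) : ℝ) ≤ ρ * n + b

/-- The execution of a deterministic distributed (full-sensing) algorithm `A` against the
1-activating injection pattern `a`; stations are identified with their activation rounds. -/
def exec (A : Algo) (a : ℕ → ℕ) : ℕ → (ℕ → A.State) × (ℕ → ℕ)
  | 0 => (fun _ => A.init, fun _ => 0)
  | t + 1 =>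
    let st := (exec A a t).1
    let pend := (exec A a t).2
    let tx : Finset ℕ := (Finset.range t).filter fun v => 0 < pend v ∧ A.transmits (st v)
    let fb : ℕ → Feedback := fun v =>
      if tx.card = 0 then Feedback.silence
      else if tx.card = 1 then Feedback.heard (decide (v ∈ tx))
      else Feedback.collision
    (fun v => A.step (st v) (fb v) (decide (v = t ∧ a t ≠ 0)),
     fun v => (if v ∈ tx ∧ tx.card = 1 then pend v - 1 else pend v) + (if v = t then a t else 0))

/-- The number of stations transmitting in round `t`; a round is void (no packet heard)
exactly when this number is different from `1`. -/
def txCount (A : Algo) (a : ℕ → ℕ) (t : ℕ) : ℕ :=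
  ((Finset.range t).filter fun v =>
    0 < (exec A a t).2 v ∧ A.transmits ((exec A a t).1 v)).card

namespace NoStab
variable (A : Algo)

def pend (a : ℕ → ℕ) (t v : ℕ) : ℕ := (exec A a t).2 v
def stt (a : ℕ → ℕ) (t v : ℕ) : A.State := (exec A a t).1 v
def tx (a : ℕ → ℕ) (t : ℕ) : Finset ℕ :=
  (Finset.range t).filter fun v => 0 < pend A a t v ∧ A.transmits (stt A a t v)
def fbk (a : ℕ → ℕ) (t v : ℕ) : Feedback :=
  if (tx A a t).card = 0 then Feedback.silence
  else if (tx A a t).card = 1 then Feedback.heard (decide (v ∈ tx A a t))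
  else Feedback.collision

lemma txCount_eq (a : ℕ → ℕ) (t : ℕ) : txCount A a t = (tx A a t).card := rfl

lemma pend_succ (a : ℕ → ℕ) (t v : ℕ) :
    pend A a (t+1) v = (if v ∈ tx A a t ∧ (tx A a t).card = 1 then pend A a t v - 1
      else pend A a t v) + (if v = t then a t else 0) := rfl

lemma stt_succ (a : ℕ → ℕ) (t v : ℕ) :
    stt A a (t+1) v = A.step (stt A a t v) (fbk A a t v) (decide (v = t ∧ a t ≠ 0)) := rfl

lemma pend_zero (a : ℕ → ℕ) (v : ℕ) : pend A a 0 v = 0 := rfl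

lemma mem_tx {a : ℕ → ℕ} {t v : ℕ} :
    v ∈ tx A a t ↔ v < t ∧ 0 < pend A a t v ∧ A.transmits (stt A a t v) := by
  simp [tx, Finset.mem_filter, Finset.mem_range, and_assoc]

end NoStab

namespace NoStab
variable (A : Algo)

/-- Locality: executions agree if the patterns agree on earlier rounds. -/
lemma exec_congr {a a' : ℕ → ℕ} : ∀ {t : ℕ}, (∀ t' < t, a t' = a' t') →
    exec A a t = exec A a' t
  | 0, _ => rfl
  | t + 1, h => by
    have ih : exec A a t = exec A a' t := exec_congr (fun t' ht' => h t' (ht'.trans (Nat.lt_succ_self t)))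
    have hat : a t = a' t := h t (Nat.lt_succ_self t)
    simp only [exec, ih, hat]

lemma txCount_congr {a a' : ℕ → ℕ} {t : ℕ} (h : ∀ t' < t, a t' = a' t') :
    txCount A a t = txCount A a' t := by
  unfold txCount
  rw [exec_congr A h]

lemma pend_of_le {a : ℕ → ℕ} : ∀ {t v : ℕ}, t ≤ v → pend A a t v = 0
  | 0, v, _ => rfl
  | t + 1, v, h => by
    have h1 : t ≤ v := (Nat.le_succ t).trans h
    have h0 : pend A a t v = 0 := pend_of_le h1
    have hne : v ∉ tx A a t := by
      intro hm
      have := (mem_tx A).1 hm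
      omega
    rw [pend_succ, if_neg (by tauto), h0, if_neg (by omega)]

lemma notMem_tx_of_le {a : ℕ → ℕ} {t v : ℕ} (h : t ≤ v) : v ∉ tx A a t := by
  intro hm; exact absurd ((mem_tx A).1 hm).1 (by omega)

/-- A station that never transmitted keeps its injected packets. -/
lemma pend_stable {a : ℕ → ℕ} {u : ℕ} : ∀ {T : ℕ}, u < T →
    (∀ r < T, u ∉ tx A a r) → pend A a T u = a u
  | 0, h, _ => absurd h (Nat.not_lt_zero u)
  | T + 1, h, hn => by
    rcases Nat.lt_or_ge u T with hT | hT
    · have ih := pend_stable hT (fun r hr => hn r (hr.trans (Nat.lt_succ_self T)))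
      rw [pend_succ, if_neg (fun hc => hn T (Nat.lt_succ_self T) hc.1), ih,
        if_neg (by omega), Nat.add_zero]
    · have huT : u = T := by omega
      subst huT
      rw [pend_succ, if_neg (fun hc => hn u (Nat.lt_succ_self u) hc.1),
        pend_of_le A (le_refl u), if_pos rfl, Nat.zero_add]

/-- number of heard rounds before `n`. -/
def heard (a : ℕ → ℕ) (n : ℕ) : ℕ := ((Finset.range n).filter fun t => txCount A a t = 1).card

/-- number of void rounds before `n`. -/
def voids (a : ℕ → ℕ) (n : ℕ) : ℕ := ((Finset.range n).filter fun t => txCount A a t ≠ 1).card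

lemma heard_add_voids (a : ℕ → ℕ) (n : ℕ) : heard A a n + voids A a n = n := by
  classical
  have := Finset.card_filter_add_card_filter_not
    (s := Finset.range n) (p := fun t => txCount A a t = 1)
  simpa [heard, voids] using this

/-- Queue-counting identity: pending = injected - heard. -/
lemma sum_pend (a : ℕ → ℕ) : ∀ n : ℕ,
    (∑ v ∈ Finset.range n, pend A a n v) + heard A a n = ∑ t ∈ Finset.range n, a t
  | 0 => by simp [heard]
  | n + 1 => by
    classical
    have ih := sum_pend a n
    have hsplit : ∑ v ∈ Finset.range (n+1), pend A a (n+1) v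
        = (∑ v ∈ Finset.range n, pend A a (n+1) v) + pend A a (n+1) n := by
      rw [Finset.sum_range_succ]
    have hlast : pend A a (n+1) n = a n := by
      rw [pend_succ, if_neg (fun hc => notMem_tx_of_le A (le_refl n) hc.1),
        pend_of_le A (le_refl n), if_pos rfl, Nat.zero_add]
    have hheard : heard A a (n+1) = heard A a n + (if txCount A a n = 1 then 1 else 0) := by
      unfold heard
      rw [Finset.range_add_one, Finset.filter_insert]
      split
      · rw [Finset.card_insert_of_notMem (by simp)]
      · simp
    have hmain : (∑ v ∈ Finset.range n, pend A a (n+1) v) + (if txCount A a n = 1 then 1 else 0)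
        = ∑ v ∈ Finset.range n, pend A a n v := by
      by_cases h1 : (tx A a n).card = 1
      · obtain ⟨w, hw⟩ := Finset.card_eq_one.1 h1
        have hwmem : w ∈ tx A a n := by simp [hw]
        have hwrange : w ∈ Finset.range n := by
          simpa using ((mem_tx A).1 hwmem).1
        have hwpos : 0 < pend A a n w := ((mem_tx A).1 hwmem).2.1
        have h2 : ∀ v ∈ (Finset.range n).erase w, pend A a (n+1) v = pend A a n v := by
          intro v hv
          have hvn : v < n := Finset.mem_range.1 (Finset.mem_of_mem_erase hv)
          have hvw : v ≠ w := Finset.ne_of_mem_erase hv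
          rw [pend_succ, if_neg (fun hc => hvw (by simpa [hw] using hc.1)),
            if_neg (by omega), Nat.add_zero]
        have h3 : pend A a (n+1) w = pend A a n w - 1 := by
          have hwn : w < n := Finset.mem_range.1 hwrange
          rw [pend_succ, if_pos (⟨hwmem, h1⟩ : w ∈ tx A a n ∧ (tx A a n).card = 1),
            if_neg (by omega), Nat.add_zero]
        have e1 : ∑ v ∈ Finset.range n, pend A a (n+1) v
            = (∑ v ∈ (Finset.range n).erase w, pend A a n v) + (pend A a n w - 1) := by
          rw [← Finset.sum_erase_add _ _ hwrange, h3, Finset.sum_congr rfl h2]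
        have e2 : ∑ v ∈ Finset.range n, pend A a n v
            = (∑ v ∈ (Finset.range n).erase w, pend A a n v) + pend A a n w := by
          rw [← Finset.sum_erase_add _ _ hwrange]
        rw [e1, e2, if_pos (show txCount A a n = 1 from by rw [txCount_eq]; exact h1)]
        omega
      · have hpend : ∀ v ∈ Finset.range n, pend A a (n+1) v = pend A a n v := by
          intro v hv
          have hvn : v < n := Finset.mem_range.1 hv
          rw [pend_succ, if_neg (fun hc => h1 hc.2), if_neg (by omega), Nat.add_zero]
        rw [Finset.sum_congr rfl hpend,
          if_neg (show ¬ txCount A a n = 1 from by rw [txCount_eq]; exact h1), Nat.add_zero]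
    rw [Finset.sum_range_succ (f := a), ← ih, hsplit, hlast, hheard]
    omega

end NoStab

namespace NoStab
variable (A : Algo)

/-- The perturbed pattern: withhold at round `u`, inject double at round `u+1`. -/
def perturb (c : ℕ → ℕ) (u : ℕ) : ℕ → ℕ :=
  fun t => if t = u then 0 else if t = u + 1 then 2 else c t

/-- critical event: station `u` transmits in the base execution. -/
def Event1 (c : ℕ → ℕ) (u r : ℕ) : Prop := u ∈ tx A c r

/-- critical event: station `u+1`'s state transmits while it has no packets (base execution). -/
def Event2 (c : ℕ → ℕ) (u r : ℕ) : Prop :=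
  u + 1 < r ∧ pend A c r (u+1) = 0 ∧ A.transmits (stt A c r (u+1))

/-- Relation between the perturbed and base executions at time `t`. -/
def Rel (c : ℕ → ℕ) (u t : ℕ) : Prop :=
  (∀ v, v ≠ u → stt A (perturb c u) t v = stt A c t v) ∧
  (∀ v, v ≠ u → v ≠ u + 1 → pend A (perturb c u) t v = pend A c t v) ∧
  (u < t → pend A (perturb c u) t u = 0) ∧
  (pend A (perturb c u) t (u+1) = pend A c t (u+1) + if u + 1 < t then 1 else 0)

lemma rel_of_le {c : ℕ → ℕ} {u t : ℕ} (h : t ≤ u) : Rel A c u t := by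
  have hexec : exec A (perturb c u) t = exec A c t := by
    apply exec_congr
    intro t' ht'
    have h1 : t' ≠ u := by omega
    have h2 : t' ≠ u + 1 := by omega
    simp [perturb, h1, h2]
  have hst : ∀ v, stt A (perturb c u) t v = stt A c t v := fun v => by
    unfold stt; rw [hexec]
  have hpend : ∀ v, pend A (perturb c u) t v = pend A c t v := fun v => by
    unfold pend; rw [hexec]
  refine ⟨fun v _ => hst v, fun v _ _ => hpend v, fun hc => absurd hc (by omega), ?_⟩
  rw [hpend, if_neg (by omega)]
  omega

lemma u_notMem_tx_d {c : ℕ → ℕ} {u t : ℕ} (hrel : Rel A c u t) :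
    u ∉ tx A (perturb c u) t := by
  intro hm
  obtain ⟨hlt, hpos, -⟩ := (mem_tx A).1 hm
  rw [hrel.2.2.1 hlt] at hpos
  exact absurd hpos (by omega)

lemma tx_d_no_phantom {c : ℕ → ℕ} {u r : ℕ} (hrel : Rel A c u r) (hE2 : ¬ Event2 A c u r) :
    tx A (perturb c u) r = (tx A c r).erase u := by
  ext v
  rw [Finset.mem_erase]
  by_cases hvu : v = u
  · subst hvu
    simp only [mem_tx]
    constructor
    · intro h
      exact absurd ((mem_tx A).2 h) (u_notMem_tx_d A hrel)
    · rintro ⟨h, -⟩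
      exact absurd rfl h
  · by_cases hvu1 : v = u + 1
    · subst hvu1
      by_cases hur : u + 1 < r
      · simp only [mem_tx]
        rw [hrel.1 (u+1) hvu, hrel.2.2.2, if_pos hur]
        constructor
        · rintro ⟨-, -, htr⟩
          have hpos : 0 < pend A c r (u+1) := by
            rcases Nat.eq_zero_or_pos (pend A c r (u+1)) with h0 | h0
            · exact absurd ⟨hur, h0, htr⟩ hE2
            · exact h0
          exact ⟨hvu, hur, hpos, htr⟩
        · rintro ⟨-, -, hpos, htr⟩
          exact ⟨hur, by omega, htr⟩
      · constructor
        · intro hm; exact absurd ((mem_tx A).1 hm).1 hur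
        · rintro ⟨-, hm⟩; exact absurd ((mem_tx A).1 hm).1 hur
    · simp only [mem_tx]
      rw [hrel.1 v hvu, hrel.2.1 v hvu hvu1]
      tauto

lemma tx_d_phantom {c : ℕ → ℕ} {u r : ℕ} (hrel : Rel A c u r) (hE2 : Event2 A c u r) :
    tx A (perturb c u) r = insert (u+1) ((tx A c r).erase u) := by
  obtain ⟨hur, hp0, htr⟩ := hE2
  ext v
  rw [Finset.mem_insert, Finset.mem_erase]
  by_cases hvu : v = u
  · subst hvu
    constructor
    · intro h; exact absurd h (u_notMem_tx_d A hrel)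
    · rintro (h | ⟨h, -⟩) <;> omega
  · by_cases hvu1 : v = u + 1
    · subst hvu1
      constructor
      · intro _; exact Or.inl rfl
      · intro _
        rw [mem_tx]
        refine ⟨by omega, ?_, ?_⟩
        · rw [hrel.2.2.2, if_pos hur]; omega
        · rw [hrel.1 (u+1) hvu]; exact htr
    · simp only [mem_tx]
      rw [hrel.1 v hvu, hrel.2.1 v hvu hvu1]
      constructor
      · intro h; exact Or.inr ⟨hvu, h⟩
      · rintro (h | ⟨-, h⟩)
        · exact absurd h hvu1
        · exact h

lemma tx_d_eq {c : ℕ → ℕ} {u r : ℕ} (hrel : Rel A c u r) (hE1 : ¬ Event1 A c u r)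
    (hE2 : ¬ Event2 A c u r) : tx A (perturb c u) r = tx A c r := by
  rw [tx_d_no_phantom A hrel hE2, Finset.erase_eq_of_notMem hE1]

lemma rel_succ {c : ℕ → ℕ} {u t : ℕ} (hcu1 : c (u+1) = 1) (hrel : Rel A c u t)
    (hE1 : ¬ Event1 A c u t) (hE2 : ¬ Event2 A c u t) : Rel A c u (t+1) := by
  rcases Nat.lt_or_ge t u with htu | htu
  · exact rel_of_le A (by omega)
  have htx : tx A (perturb c u) t = tx A c t := tx_d_eq A hrel hE1 hE2
  have hfb : ∀ v, fbk A (perturb c u) t v = fbk A c t v := by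
    intro v; unfold fbk; rw [htx]
  refine ⟨?_, ?_, ?_, ?_⟩
  · intro v hvu
    rw [stt_succ, stt_succ, hfb, hrel.1 v hvu]
    congr 1
    rw [decide_eq_decide]
    constructor
    · rintro ⟨hvt, hd⟩
      subst hvt
      refine ⟨rfl, ?_⟩
      by_cases hvu1 : v = u + 1
      · rw [hvu1, hcu1]; omega
      · rw [perturb, if_neg hvu, if_neg hvu1] at hd; exact hd
    · rintro ⟨hvt, hd⟩
      subst hvt
      refine ⟨rfl, ?_⟩
      by_cases hvu1 : v = u + 1
      · rw [hvu1]; simp [perturb]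
      · rw [perturb, if_neg hvu, if_neg hvu1]; exact hd
  · intro v hvu hvu1
    rw [pend_succ, pend_succ, htx, hrel.2.1 v hvu hvu1]
    congr 1
    by_cases hvt : v = t
    · subst hvt
      rw [if_pos rfl, if_pos rfl, perturb, if_neg hvu, if_neg hvu1]
    · rw [if_neg hvt, if_neg hvt]
  · intro hut1
    rcases Nat.lt_or_ge u t with hut | hut
    · rw [pend_succ, if_neg ?hc, hrel.2.2.1 hut, if_neg (by omega), Nat.add_zero]
      case hc => exact fun hc => u_notMem_tx_d A hrel hc.1
    · have : u = t := by omega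
      subst this
      rw [pend_succ, if_neg (fun hc => notMem_tx_of_le A (le_refl u) hc.1),
        pend_of_le A (le_refl u), if_pos rfl]
      simp [perturb]
  · rcases Nat.lt_or_ge (u+1) t with hut | hut
    · have h4 := hrel.2.2.2
      rw [if_pos hut] at h4
      rw [pend_succ, pend_succ, htx, if_neg (by omega : ¬ u + 1 = t),
        if_neg (by omega : ¬ u + 1 = t), if_pos (by omega : u + 1 < t + 1)]
      by_cases hm : u + 1 ∈ tx A c t ∧ (tx A c t).card = 1
      · have hpos : 0 < pend A c t (u+1) := ((mem_tx A).1 hm.1).2.1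
        rw [if_pos hm, if_pos hm, h4]
        omega
      · rw [if_neg hm, if_neg hm, h4]
    · rcases (by omega : t = u ∨ t = u + 1) with h2 | h2
      · rw [h2, pend_of_le A (le_refl (u+1)), pend_of_le A (le_refl (u+1)),
          if_neg (by omega)]
      · have e1 : pend A (perturb c u) (t+1) (u+1) = 2 := by
          rw [h2, pend_succ, if_neg (fun hc => notMem_tx_of_le A (le_refl (u+1)) hc.1),
            pend_of_le A (le_refl (u+1)), if_pos rfl, Nat.zero_add]
          simp [perturb]
        have e2 : pend A c (t+1) (u+1) = 1 := by
          rw [h2, pend_succ, if_neg (fun hc => notMem_tx_of_le A (le_refl (u+1)) hc.1),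
            pend_of_le A (le_refl (u+1)), if_pos rfl, Nat.zero_add, hcu1]
        rw [e1, e2, if_pos (by omega)]

lemma comp_rel {c : ℕ → ℕ} {u : ℕ} (hcu1 : c (u+1) = 1) :
    ∀ {T : ℕ}, (∀ r < T, ¬ Event1 A c u r ∧ ¬ Event2 A c u r) → Rel A c u T
  | 0, _ => rel_of_le A (Nat.zero_le u)
  | T + 1, h => by
    have ih := comp_rel hcu1 (fun r hr => h r (hr.trans (Nat.lt_succ_self T)))
    exact rel_succ A hcu1 ih (h T (Nat.lt_succ_self T)).1 (h T (Nat.lt_succ_self T)).2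

end NoStab

namespace NoStab
variable (A : Algo)

/-- Shape invariant guaranteeing admissibility: values at most 2, every 2 directly
preceded by a 0, every 0 directly followed by a 2. -/
def Shape (p : ℕ → ℕ) : Prop :=
  ∀ t, p t ≤ 2 ∧ (p t = 2 → 0 < t ∧ p (t-1) = 0) ∧ (p t = 0 → p (t+1) = 2)

/-- Prefix invariant: all-ones after `m`, shape, and exact total `m` on `[0,m)`. -/
def Inv (p : ℕ → ℕ) (m : ℕ) : Prop :=
  (∀ t, m ≤ t → p t = 1) ∧ Shape p ∧ (∑ t ∈ Finset.range m, p t) = m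

lemma shape_sum_le {p : ℕ → ℕ} (hs : Shape p) :
    ∀ (n s : ℕ), (∑ t ∈ Finset.Ico s (s+n), p t) ≤ n + 1 := by
  intro n
  induction n using Nat.strong_induction_on with
  | _ n ih =>
    intro s
    match n with
    | 0 => simp
    | 1 =>
      have : ∑ t ∈ Finset.Ico s (s+1), p t = p s := by simp
      rw [this]
      have := (hs s).1
      omega
    | n+2 =>
      have e : s + (n+2) = (s + n + 1) + 1 := by omega
      rw [e, Finset.sum_Ico_succ_top (by omega : s ≤ s + n + 1)]
      by_cases h2 : p (s + n + 1) = 2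
      · have h0 : p (s + n) = 0 := by
          have := ((hs (s+n+1)).2.1 h2).2
          simpa using this
        have e2 : s + n + 1 = (s + n) + 1 := rfl
        rw [e2, Finset.sum_Ico_succ_top (by omega : s ≤ s + n), h0]
        have hih := ih n (by omega) s
        omega
      · have hih := ih (n+1) (by omega) s
        have e3 : s + (n+1) = s + n + 1 := by omega
        rw [e3] at hih
        have := (hs (s+n+1)).1
        omega

lemma shape_sum_ge {p : ℕ → ℕ} (hs : Shape p) :
    ∀ n, n ≤ (∑ t ∈ Finset.range n, p t) + 1 := by
  have main : ∀ n, n ≤ (∑ t ∈ Finset.range n, p t) + (if p n = 2 then 1 else 0) := by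
    intro n
    induction n with
    | zero => simp
    | succ n ihn =>
      rw [Finset.sum_range_succ]
      by_cases h2 : p n = 2
      · rw [if_pos h2] at ihn
        split <;> omega
      · rw [if_neg h2] at ihn
        by_cases h0 : p n = 0
        · have := (hs n).2.2 h0
          rw [if_pos this]
          omega
        · have := (hs n).1
          split <;> omega
  intro n
  have := main n
  split at this <;> omega

lemma sum_run {p : ℕ → ℕ} {m : ℕ} (hI : Inv p m) :
    ∀ {n : ℕ}, m ≤ n → (∑ t ∈ Finset.range n, p t) = n := by
  intro n hn
  induction n, hn using Nat.le_induction with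
  | base => exact hI.2.2
  | succ n hn ihn =>
    rw [Finset.sum_range_succ, ihn, hI.1 n hn]

lemma voids_succ (a : ℕ → ℕ) (n : ℕ) :
    voids A a (n+1) = voids A a n + if txCount A a n = 1 then 0 else 1 := by
  unfold voids
  rw [Finset.range_add_one, Finset.filter_insert]
  by_cases h : txCount A a n = 1
  · rw [if_neg (by simp [h]), if_pos h]
    omega
  · rw [if_pos (by simpa using h), if_neg h, Finset.card_insert_of_notMem (by simp)]

lemma voids_stable {a : ℕ → ℕ} {m : ℕ}
    (h : ∀ r, m ≤ r → txCount A a r = 1) :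
    ∀ {n : ℕ}, m ≤ n → voids A a n = voids A a m := by
  intro n hn
  induction n, hn using Nat.le_induction with
  | base => rfl
  | succ n hn ihn =>
    rw [voids_succ, if_pos (h n hn), ihn]
    omega

lemma shape_perturb {p : ℕ → ℕ} {m u : ℕ} (hs : Shape p) (h1 : ∀ t, m ≤ t → p t = 1)
    (hu : m ≤ u) : Shape (perturb p u) := by
  intro t
  have hsu : p u = 1 := h1 u hu
  have hsu1 : p (u+1) = 1 := h1 (u+1) (by omega)
  refine ⟨?_, ?_, ?_⟩
  · unfold perturb
    split
    · omega
    · split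
      · omega
      · exact (hs t).1
  · intro h2
    by_cases htu : t = u
    · rw [htu] at h2; simp [perturb] at h2
    · by_cases htu1 : t = u + 1
      · subst htu1
        exact ⟨by omega, by simp [perturb]⟩
      · rw [perturb, if_neg htu, if_neg htu1] at h2
        have hlt : t < m := by
          by_contra hge
          rw [h1 t (by omega)] at h2
          omega
        obtain ⟨hpos, h0⟩ := (hs t).2.1 h2
        refine ⟨hpos, ?_⟩
        rw [perturb, if_neg (by omega), if_neg (by omega)]
        exact h0
  · intro h0
    by_cases htu : t = u
    · subst htu
      rw [perturb, if_neg (by omega), if_pos rfl]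
    · by_cases htu1 : t = u + 1
      · rw [htu1] at h0; simp [perturb] at h0
      · rw [perturb, if_neg htu, if_neg htu1] at h0
        have hlt : t < m := by
          by_contra hge
          rw [h1 t (by omega)] at h0
          omega
        have h2 := (hs t).2.2 h0
        have ht1m : t + 1 < m := by
          by_contra hge
          rw [h1 (t+1) (by omega)] at h2
          omega
        rw [perturb, if_neg (by omega), if_neg (by omega)]
        exact h2

lemma sum_perturb {p : ℕ → ℕ} {m u : ℕ} (hI : Inv p m) (hu : m ≤ u) :
    ∀ {n : ℕ}, u + 2 ≤ n → (∑ t ∈ Finset.range n, perturb p u t) = n := by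
  have hpu : p u = 1 := hI.1 u hu
  have hpu1 : p (u+1) = 1 := hI.1 (u+1) (by omega)
  have hbase : (∑ t ∈ Finset.range (u+2), perturb p u t) = u + 2 := by
    rw [Finset.sum_range_succ, Finset.sum_range_succ]
    have hagree : ∀ t ∈ Finset.range u, perturb p u t = p t := by
      intro t ht
      have := Finset.mem_range.1 ht
      rw [perturb, if_neg (by omega), if_neg (by omega)]
    rw [Finset.sum_congr rfl hagree, sum_run hI hu]
    simp [perturb]
  intro n hn
  induction n, hn using Nat.le_induction with
  | base => exact hbase
  | succ n hn ihn =>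
    rw [Finset.sum_range_succ, ihn]
    rw [perturb, if_neg (by omega), if_neg (by omega), hI.1 n (by omega)]

lemma inv_perturb {p : ℕ → ℕ} {m u : ℕ} (hI : Inv p m) (hu : m ≤ u)
    {m' : ℕ} (hm' : u + 2 ≤ m') : Inv (perturb p u) m' := by
  refine ⟨?_, shape_perturb hI.2.1 hI.1 hu, sum_perturb hI hu hm'⟩
  intro t ht
  rw [perturb, if_neg (by omega), if_neg (by omega)]
  exact hI.1 t (by omega)

end NoStab

namespace NoStab
variable (A : Algo)

/-- There is an extension of the prefix with one more guaranteed void round. -/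
def Ext (p : ℕ → ℕ) (m : ℕ) : Prop :=
  ∃ p' : ℕ → ℕ, ∃ m' : ℕ, Inv p' m' ∧ m < m' ∧ (∀ t, t < m → p' t = p t) ∧
    ∃ r, m ≤ r ∧ r < m' ∧ txCount A p' r ≠ 1

lemma ext_of_void {p : ℕ → ℕ} {m u r : ℕ} (hI : Inv p m) (hu : m ≤ u) (hr : m ≤ r)
    (hvoid : txCount A (perturb p u) r ≠ 1) : Ext A p m := by
  refine ⟨perturb p u, max (r+1) (u+2), inv_perturb hI hu (le_max_right _ _),
    lt_of_lt_of_le (by omega : m < u + 2) (le_max_right _ _), ?_, r, hr,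
    lt_of_lt_of_le (Nat.lt_succ_self r) (le_max_left _ _), hvoid⟩
  intro t ht
  rw [perturb, if_neg (by omega), if_neg (by omega)]

lemma loop (V : ℕ) : ∀ (j : ℕ) (p : ℕ → ℕ) (m : ℕ) (W : Finset ℕ),
    Inv p m →
    (∀ r, m ≤ r → txCount A p r = 1) →
    voids A p m = V →
    (∀ w ∈ W, w < m) →
    (∀ w ∈ W, ∀ t, m ≤ t → 1 ≤ pend A p t w) →
    V + 1 ≤ W.card + j →
    Ext A p m := by
  intro j
  induction j with
  | zero =>
    intro p m W hI hv hV hWlt hWpend hcard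
    exfalso
    have hsum := sum_pend A p m
    have hhv := heard_add_voids A p m
    rw [sum_run hI (le_refl m)] at hsum
    rw [hV] at hhv
    have hWsub : W ⊆ Finset.range m := fun w hw => Finset.mem_range.2 (hWlt w hw)
    have hge : W.card ≤ ∑ v ∈ Finset.range m, pend A p m v := by
      calc W.card = ∑ _w ∈ W, 1 := by simp
        _ ≤ ∑ w ∈ W, pend A p m w :=
            Finset.sum_le_sum (fun w hw => hWpend w hw m (le_refl m))
        _ ≤ ∑ v ∈ Finset.range m, pend A p m v :=
            Finset.sum_le_sum_of_subset hWsub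
    omega
  | succ j ihj =>
    intro p m W hI hv hV hWlt hWpend hcard
    classical
    by_cases hstuck : ∃ u, m ≤ u ∧ ∀ r, u ∉ tx A p r
    · obtain ⟨u, hu, hust⟩ := hstuck
      have hcu1 : p (u+1) = 1 := hI.1 (u+1) (by omega)
      by_cases hph : ∃ r, Event2 A p u r
      · -- a phantom round exists: the perturbed execution has a collision there
        have hEr := Nat.find_spec hph
        have hrel : Rel A p u (Nat.find hph) := comp_rel A hcu1 (fun r' hr' =>
          ⟨hust r', Nat.find_min hph hr'⟩)
        have htxd := tx_d_phantom A hrel hEr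
        have hue : (tx A p (Nat.find hph)).erase u = tx A p (Nat.find hph) :=
          Finset.erase_eq_of_notMem (hust _)
        have hu1 : u + 1 ∉ tx A p (Nat.find hph) := by
          intro hm1
          have h := ((mem_tx A).1 hm1).2.1
          rw [hEr.2.1] at h
          exact absurd h (by omega)
        have h1 : (tx A p (Nat.find hph)).card = 1 := by
          rw [← txCount_eq]
          exact hv _ (by have := hEr.1; omega)
        have hvoid : txCount A (perturb p u) (Nat.find hph) ≠ 1 := by
          rw [txCount_eq, htxd, hue, Finset.card_insert_of_notMem hu1, h1]
          omega
        exact ext_of_void A hI hu (by have := hEr.1; omega) hvoid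
      · -- no events ever: the gained packet is stuck for good; recurse
        have hnoev : ∀ r' : ℕ, ¬ Event1 A p u r' ∧ ¬ Event2 A p u r' :=
          fun r' => ⟨hust r', fun hE => hph ⟨r', hE⟩⟩
        have hrel : ∀ t, Rel A p u t := fun t => comp_rel A hcu1 (fun r' _ => hnoev r')
        have htxd : ∀ t, tx A (perturb p u) t = tx A p t := fun t =>
          tx_d_eq A (hrel t) (hnoev t).1 (hnoev t).2
        have htc : ∀ t, txCount A (perturb p u) t = txCount A p t := fun t => by
          rw [txCount_eq, txCount_eq, htxd t]
        have hI' : Inv (perturb p u) (u+2) := inv_perturb hI hu (le_refl _)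
        have hv' : ∀ r, u + 2 ≤ r → txCount A (perturb p u) r = 1 := fun r hr => by
          rw [htc r]; exact hv r (by omega)
        have hV' : voids A (perturb p u) (u+2) = V := by
          have e1 : voids A (perturb p u) (u+2) = voids A p (u+2) := by
            unfold voids
            congr 1
            apply Finset.filter_congr
            intro t _
            simp [htc t]
          rw [e1, voids_stable A hv (by omega : m ≤ u + 2), hV]
        have hWlt' : ∀ w ∈ insert (u+1) W, w < u + 2 := by
          intro w hw
          rcases Finset.mem_insert.1 hw with h | h
          · omega
          · have := hWlt w h; omega
        have hWpend' : ∀ w ∈ insert (u+1) W, ∀ t, u + 2 ≤ t →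
            1 ≤ pend A (perturb p u) t w := by
          intro w hw t ht
          rcases Finset.mem_insert.1 hw with h | h
          · subst h
            have h4 := (hrel t).2.2.2
            rw [if_pos (by omega)] at h4
            omega
          · have hwm := hWlt w h
            rw [(hrel t).2.1 w (by omega) (by omega)]
            exact hWpend w h t (by omega)
        have hcard' : V + 1 ≤ (insert (u+1) W).card + j := by
          rw [Finset.card_insert_of_notMem (fun hmem => by have := hWlt _ hmem; omega)]
          omega
        obtain ⟨p', m', hI'', hm', hagree, r, hr1, hr2, hvoid⟩ :=
          ihj (perturb p u) (u+2) (insert (u+1) W) hI' hv' hV' hWlt' hWpend' hcard'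
        refine ⟨p', m', hI'', by omega, ?_, r, by omega, hr2, hvoid⟩
        intro t ht
        rw [hagree t (by omega), perturb, if_neg (by omega), if_neg (by omega)]
    · -- every station eventually transmits: find one served before its successor
      push_neg at hstuck
      have H : ∀ i : ℕ, ∃ r, (m + i) ∈ tx A p r := by
        intro i
        obtain ⟨r, hr⟩ := hstuck (m + i) (by omega)
        exact ⟨r, hr⟩
      have hne : ∀ i, Nat.find (H i) ≠ Nat.find (H (i+1)) := by
        intro i heq
        have h1 := Nat.find_spec (H i)
        have h2 := Nat.find_spec (H (i+1))
        rw [← heq] at h2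
        have hgt : m + i < Nat.find (H i) := ((mem_tx A).1 h1).1
        have hc : (tx A p (Nat.find (H i))).card = 1 := by
          rw [← txCount_eq]
          exact hv _ (by omega)
        obtain ⟨x, hx⟩ := Finset.card_eq_one.1 hc
        rw [hx, Finset.mem_singleton] at h1 h2
        omega
      have hlemma : ∃ i, Nat.find (H i) < Nat.find (H (i+1)) := by
        by_contra hcon
        push_neg at hcon
        have hdesc : ∀ i, Nat.find (H (i+1)) < Nat.find (H i) := by
          intro i
          have := hcon i
          have := hne i
          omega
        have hbound : ∀ i, Nat.find (H i) + i ≤ Nat.find (H 0) := by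
          intro i
          induction i with
          | zero => omega
          | succ i ihi =>
            have := hdesc i
            omega
        have := hbound (Nat.find (H 0) + 1)
        omega
      obtain ⟨i, hi⟩ := hlemma
      have hmem : (m + i) ∈ tx A p (Nat.find (H i)) := Nat.find_spec (H i)
      have hgt : m + i < Nat.find (H i) := ((mem_tx A).1 hmem).1
      have hnoE2 : ∀ q, q ≤ Nat.find (H i) → ¬ Event2 A p (m+i) q := by
        intro q hq hE
        obtain ⟨hq1, hp0, -⟩ := hE
        have hstab : pend A p q (m+i+1) = p (m+i+1) := by
          apply pend_stable A (by omega : m + i + 1 < q)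
          intro q' hq'
          exact Nat.find_min (H (i+1)) (by omega)
        rw [hI.1 (m+i+1) (by omega)] at hstab
        omega
      have hrel : Rel A p (m+i) (Nat.find (H i)) := by
        apply comp_rel A (hI.1 (m+i+1) (by omega))
        intro r' hr'
        exact ⟨Nat.find_min (H i) hr', hnoE2 r' (by omega)⟩
      have htxd := tx_d_no_phantom A hrel (hnoE2 _ (le_refl _))
      have hc : (tx A p (Nat.find (H i))).card = 1 := by
        rw [← txCount_eq]
        exact hv _ (by omega)
      obtain ⟨x, hx⟩ := Finset.card_eq_one.1 hc
      have hxu : x = m + i := by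
        rw [hx, Finset.mem_singleton] at hmem
        omega
      have hempty : tx A (perturb p (m+i)) (Nat.find (H i)) = ∅ := by
        rw [htxd, hx, hxu, Finset.erase_singleton]
      have hvoid : txCount A (perturb p (m+i)) (Nat.find (H i)) ≠ 1 := by
        rw [txCount_eq, hempty]
        simp
      exact ext_of_void A hI (by omega : m ≤ m + i) (by omega : m ≤ Nat.find (H i)) hvoid

/-- KEY: any valid prefix extends to one with a further void round. -/
lemma key (p : ℕ → ℕ) (m : ℕ) (hI : Inv p m) : Ext A p m := by
  classical
  by_cases hvoid : ∃ r, m ≤ r ∧ txCount A p r ≠ 1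
  · obtain ⟨r, hr, hne⟩ := hvoid
    refine ⟨p, r + 1, ⟨fun t ht => hI.1 t (by omega), hI.2.1, sum_run hI (by omega)⟩,
      by omega, fun t _ => rfl, r, hr, by omega, hne⟩
  · push_neg at hvoid
    exact loop A (voids A p m) (voids A p m + 1) p m ∅ hI hvoid rfl
      (by simp) (by simp) (by simp)

end NoStab

namespace NoStab
variable (A : Algo)

lemma key2 (q : (ℕ → ℕ) × ℕ) : ∃ q' : (ℕ → ℕ) × ℕ, Inv q.1 q.2 →
    (Inv q'.1 q'.2 ∧ q.2 < q'.2 ∧ (∀ t, t < q.2 → q'.1 t = q.1 t) ∧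
      ∃ r, q.2 ≤ r ∧ r < q'.2 ∧ txCount A q'.1 r ≠ 1) := by
  classical
  by_cases h : Inv q.1 q.2
  · obtain ⟨p', m', h1, h2, h3, h4⟩ := key A q.1 q.2 h
    exact ⟨(p', m'), fun _ => ⟨h1, h2, h3, h4⟩⟩
  · exact ⟨q, fun hc => absurd hc h⟩

noncomputable def chain : ℕ → (ℕ → ℕ) × ℕ
  | 0 => (fun _ => 1, 0)
  | k+1 => (key2 A (chain k)).choose

lemma chain_inv : ∀ k, Inv (chain A k).1 (chain A k).2
  | 0 => by
    have h : Inv (fun _ => 1) 0 := ⟨fun _ _ => rfl,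
      fun _ => ⟨by norm_num, fun h => by norm_num at h, fun h => by norm_num at h⟩,
      by simp⟩
    exact h
  | k+1 => ((key2 A (chain A k)).choose_spec (chain_inv k)).1

lemma chain_succ (k : ℕ) : chain A (k+1) = (key2 A (chain A k)).choose := rfl

lemma chain_spec (k : ℕ) :
    (chain A k).2 < (chain A (k+1)).2 ∧
    (∀ t, t < (chain A k).2 → (chain A (k+1)).1 t = (chain A k).1 t) ∧
    ∃ r, (chain A k).2 ≤ r ∧ r < (chain A (k+1)).2 ∧ txCount A (chain A (k+1)).1 r ≠ 1 := by
  have h := (key2 A (chain A k)).choose_spec (chain_inv A k)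
  rw [chain_succ]
  exact ⟨h.2.1, h.2.2.1, h.2.2.2⟩

lemma chain_m_mono : ∀ {k j : ℕ}, k ≤ j → (chain A k).2 ≤ (chain A j).2 := by
  intro k j hkj
  induction j, hkj using Nat.le_induction with
  | base => exact le_refl _
  | succ j hj ihj => exact ihj.trans (le_of_lt (chain_spec A j).1)

lemma chain_m_ge : ∀ k, k ≤ (chain A k).2 := by
  intro k
  induction k with
  | zero => omega
  | succ k ihk =>
    have := (chain_spec A k).1
    omega

lemma chain_agree : ∀ j k, k ≤ j → ∀ t, t < (chain A k).2 →
    (chain A j).1 t = (chain A k).1 t := by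
  intro j
  induction j with
  | zero =>
    intro k hk t _
    rw [Nat.le_zero.1 hk]
  | succ j ihj =>
    intro k hk t ht
    rcases Nat.lt_or_ge k (j+1) with h | h
    · have hkj : k ≤ j := by omega
      rw [(chain_spec A j).2.1 t (lt_of_lt_of_le ht (chain_m_mono A hkj))]
      exact ihj k hkj t ht
    · have hkk : k = j + 1 := by omega
      rw [hkk]

/-- The adversarial injection pattern. -/
noncomputable def adv : ℕ → ℕ := fun t => (chain A (t+1)).1 t

lemma adv_eq (k t : ℕ) (ht : t < (chain A k).2) : adv A t = (chain A k).1 t := by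
  have h1 : t < (chain A (t+1)).2 := lt_of_lt_of_le (Nat.lt_succ_self t) (chain_m_ge A (t+1))
  rcases le_total k (t+1) with h | h
  · exact chain_agree A (t+1) k h t ht
  · unfold adv
    rw [chain_agree A k (t+1) h t h1]

lemma adv_shape : Shape (adv A) := by
  intro t
  have hK : t + 2 ≤ (chain A (t+2)).2 := chain_m_ge A (t+2)
  have e0 : adv A t = (chain A (t+2)).1 t := adv_eq A (t+2) t (by omega)
  have e1 : adv A (t-1) = (chain A (t+2)).1 (t-1) := adv_eq A (t+2) (t-1) (by omega)
  have e2 : adv A (t+1) = (chain A (t+2)).1 (t+1) := adv_eq A (t+2) (t+1) (by omega)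
  have hs := (chain_inv A (t+2)).2.1 t
  rw [e0, e1, e2]
  exact hs

lemma adv_txCount (k r : ℕ) (hr : r < (chain A k).2) :
    txCount A (adv A) r = txCount A (chain A k).1 r := by
  apply txCount_congr
  intro t' ht'
  exact adv_eq A k t' (by omega)

end NoStab

/-- for every deterministic distributed algorithm and every integer `b ≥ 1`
there is a 1-activating injection pattern admissible for the adversary of type `(1, b)`
whose execution has infinitely many void rounds while packets are injected at the average
rate of one packet per round; consequently the number of queued packets grows unbounded,
so no deterministic distributed algorithm is stable against a 1-activating adversary of
injection rate 1 and burstiness at least 2. -/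
theorem no_stability_at_rate_one (A : Algo) (b : ℕ) (hb : 1 ≤ b) :
    ∃ a : ℕ → ℕ, Admissible 1 b a ∧
      (∀ N : ℕ, ∃ t : ℕ, N ≤ t ∧ txCount A a t ≠ 1) ∧
      (∀ n : ℕ, n ≤ (∑ t ∈ Finset.range n, a t) + b) ∧
      (∀ Q : ℕ, ∃ t : ℕ, Q < ∑ v ∈ Finset.range t, (exec A a t).2 v) := by
  classical
  refine ⟨NoStab.adv A, ?_, ?_, ?_, ?_⟩
  · -- admissibility for the (1, b) adversary
    intro s n
    have h1 := NoStab.shape_sum_le (NoStab.adv_shape A) n s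
    have h2 : (∑ t ∈ Finset.Ico s (s+n), NoStab.adv A t) ≤ n + b := by omega
    calc ((∑ t ∈ Finset.Ico s (s+n), NoStab.adv A t : ℕ) : ℝ)
        ≤ ((n + b : ℕ) : ℝ) := Nat.cast_le.2 h2
      _ = 1 * n + b := by push_cast; ring
  · -- infinitely many void rounds
    intro N
    obtain ⟨r, hr1, hr2, hr3⟩ := (NoStab.chain_spec A N).2.2
    refine ⟨r, ?_, ?_⟩
    · have := NoStab.chain_m_ge A N; omega
    · rw [NoStab.adv_txCount A (N+1) r hr2]
      exact hr3
  · -- injection rate one on the average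
    intro n
    have := NoStab.shape_sum_ge (NoStab.adv_shape A) n
    omega
  · -- unbounded queues
    intro Q
    choose rr hrr using fun k => (NoStab.chain_spec A k).2.2
    set a := NoStab.adv A with ha
    set K := Q + 2 with hK
    set t := (NoStab.chain A K).2 with htdef
    have hmonorr : StrictMono rr := strictMono_nat_of_lt_succ (fun k => by
      have h1 := (hrr k).2.1
      have h2 := (hrr (k+1)).1
      omega)
    have hsub : ∀ k ∈ Finset.range K,
        rr k ∈ (Finset.range t).filter (fun r => txCount A a r ≠ 1) := by
      intro k hk
      have hkK : k < K := Finset.mem_range.1 hk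
      have hmm : (NoStab.chain A (k+1)).2 ≤ t := NoStab.chain_m_mono A (by omega : k + 1 ≤ K)
      refine Finset.mem_filter.2 ⟨Finset.mem_range.2 ?_, ?_⟩
      · have := (hrr k).2.1; omega
      · rw [ha, NoStab.adv_txCount A (k+1) (rr k) (hrr k).2.1]
        exact (hrr k).2.2
    have hcard : K ≤ NoStab.voids A a t := by
      have := Finset.card_le_card_of_injOn rr hsub (fun x _ y _ hxy => hmonorr.injective hxy)
      simpa [NoStab.voids] using this
    have h1 := NoStab.sum_pend A a t
    have h2 := NoStab.heard_add_voids A a t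
    have h3 := NoStab.shape_sum_ge (NoStab.adv_shape A) t
    rw [← ha] at h3
    refine ⟨t, ?_⟩
    have hfin : Q < ∑ v ∈ Finset.range t, NoStab.pend A a t v := by omega
    exact hfin
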